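/- arXiv:2512.13692 — 9 statements merged into one kernel-verified Lean document; each statement's English description precedes it below -/
import Mathlib

section
/- Let p be the probability distribution on functions Bool → Bool assigning probability 1/2 to the identity function and 1/2 to Bool.not, and let q be the probability distribution assigning probability 1/2 to the constant-false function and 1/2 to the constant-true function. Then p and q have identical one-way counterfactuals, namely P_p(x, y) = P_q(x, y) = 1/2 for all x, y ∈ Bool, yet the conditioned counterfactual differs maximally: (∑ of p f over all f with f false = false and f true = false) / (∑ of p f over all f with f false = false) = 0, whereas the same ratio computed for q equals 1. -/
/-- `p` is a probability distribution on functions `A → B`. -/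
def IsProbDist {A B : Type*} [Fintype A] [DecidableEq A] [Fintype B]
    (p : (A → B) → ℝ) : Prop :=
  (∀ f, 0 ≤ p f) ∧ (∑ f, p f) = 1

/-- One-way counterfactual `P_p(x, y) = ∑_{f : f x = y} p f`. -/
def oneWay {A B : Type*} [Fintype A] [DecidableEq A] [Fintype B] [DecidableEq B]
    (p : (A → B) → ℝ) (x : A) (y : B) : ℝ :=
  ∑ f, if f x = y then p f else 0

/-- The distribution assigning 1/2 to the identity and 1/2 to `Bool.not`. -/
noncomputable def pID : (Bool → Bool) → ℝ :=
  fun f => if f = (id : Bool → Bool) then 1/2 else if f = Bool.not then 1/2 else 0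

/-- The distribution assigning 1/2 to each of the two constant functions. -/
noncomputable def qConst : (Bool → Bool) → ℝ :=
  fun f => if f = (fun _ => false) then 1/2 else if f = (fun _ => true) then 1/2 else 0

lemma univ_bb : (Finset.univ : Finset (Bool → Bool)) = {fun _ => false, id, Bool.not, fun _ => true} := by decide

lemma sum_bb (g : (Bool → Bool) → ℝ) :
    ∑ f, g f = g (fun _ => false) + g id + g Bool.not + g (fun _ => true) := by
  rw [univ_bb]
  rw [show ({fun _ => false, id, Bool.not, fun _ => true} : Finset (Bool → Bool)) = insert (fun _ => false) (insert id (insert Bool.not {fun _ => true})) from rfl]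
  rw [Finset.sum_insert (by decide), Finset.sum_insert (by decide), Finset.sum_insert (by decide), Finset.sum_singleton]
  ring

theorem identical_oneWay_but_maximally_different_conditioned_counterfactual :
    (∀ x y : Bool, oneWay pID x y = 1/2 ∧ oneWay qConst x y = 1/2) ∧
    (∑ f : Bool → Bool, if f false = false ∧ f true = false then pID f else 0) /
      (∑ f : Bool → Bool, if f false = false then pID f else 0) = 0 ∧
    (∑ f : Bool → Bool, if f false = false ∧ f true = false then qConst f else 0) /
      (∑ f : Bool → Bool, if f false = false then qConst f else 0) = 1 := by
  refine ⟨fun x y => ?_, ?_, ?_⟩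
  · cases x <;> cases y <;>
      constructor <;>
      · rw [oneWay, sum_bb]
        norm_num [pID, qConst, show (id : Bool → Bool) ≠ fun _ => false by decide,
          show (id : Bool → Bool) ≠ fun _ => true by decide,
          show Bool.not ≠ fun _ => (false:Bool) by decide,
          show Bool.not ≠ fun _ => (true:Bool) by decide,
          show Bool.not ≠ (id : Bool → Bool) by decide,
          show (fun _ => (false:Bool)) ≠ (id:Bool→Bool) by decide,
          show (fun _ => (true:Bool)) ≠ (id:Bool→Bool) by decide,
          show (fun _ => (false:Bool)) ≠ Bool.not by decide,
          show (fun _ => (true:Bool)) ≠ Bool.not by decide]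
  all_goals
    rw [sum_bb, sum_bb]
    norm_num [pID, qConst, show (id : Bool → Bool) ≠ fun _ => false by decide,
      show (id : Bool → Bool) ≠ fun _ => true by decide,
      show Bool.not ≠ fun _ => (false:Bool) by decide,
      show Bool.not ≠ fun _ => (true:Bool) by decide,
      show Bool.not ≠ (id : Bool → Bool) by decide,
      show (fun _ => (false:Bool)) ≠ (id:Bool→Bool) by decide,
      show (fun _ => (true:Bool)) ≠ (id:Bool→Bool) by decide,
      show (fun _ => (false:Bool)) ≠ Bool.not by decide,
      show (fun _ => (true:Bool)) ≠ Bool.not by decide]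
end

section
/- Let p be a probability distribution on functions Bool → Bool and let α : Bool → ℂ be the constant function with value 1/√2. Let w : Bool × Bool → ℂ be defined by w (x, y) = 1/√2 if x = y and w (x, y) = 0 otherwise (the Bell state Φ⁺). Then star w ⬝ᵥ (ρ(p, α)).mulVec w = p(id) + (1/4) · p(const false) + (1/4) · p(const true), where id is the identity function, const false the constant-false function, and const true the constant-true function (the right-hand side coerced into ℂ). -/
open Matrix

/-- The vector `ψ_f` determined by amplitudes `α` and the function `f`:
`ψ_f (x, y) = α x` if `f x = y` and `0` otherwise. -/
def psiVec {A : Type*} [DecidableEq A] (α : A → ℂ) (f : A → A) : A × A → ℂ :=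
  fun z => if f z.1 = z.2 then α z.1 else 0

/-- The oracle state `ρ(p, α) = ∑_f p f • |ψ_f⟩⟨ψ_f|`. -/
noncomputable def oracleState {A : Type*} [Fintype A] [DecidableEq A]
    (p : (A → A) → ℝ) (α : A → ℂ) : Matrix (A × A) (A × A) ℂ :=
  ∑ f, (p f : ℂ) • vecMulVec (psiVec α f) (star ∘ psiVec α f)

lemma dot_oracle {A : Type*} [Fintype A] [DecidableEq A] (p : (A → A) → ℝ) (α : A → ℂ)
    (w : A × A → ℂ) : star w ⬝ᵥ (oracleState p α).mulVec w
      = ∑ f, (p f : ℂ) * ((star w ⬝ᵥ psiVec α f) * ((star ∘ psiVec α f) ⬝ᵥ w)) := by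
  simp only [oracleState, mulVec, dotProduct, Matrix.sum_apply, Matrix.smul_apply,
    vecMulVec_apply, smul_eq_mul, Finset.mul_sum, Finset.sum_mul, Function.comp_apply,
    Pi.star_apply]
  rw [Finset.sum_comm]
  trans ∑ y : A × A, ∑ f : A → A, ∑ x : A × A,
      star (w x) * ((p f : ℂ) * (psiVec α f x * star (psiVec α f y)) * w y)
  · exact Finset.sum_congr rfl fun y _ => Finset.sum_comm
  rw [Finset.sum_comm]
  refine Finset.sum_congr rfl fun f _ => Finset.sum_congr rfl fun y _ =>
    Finset.sum_congr rfl fun x _ => by ring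

theorem bell_measurement_statistic (p : (Bool → Bool) → ℝ) (hp : IsProbDist p) :
    star (fun z : Bool × Bool => if z.1 = z.2 then ((1 / Real.sqrt 2 : ℝ) : ℂ) else 0) ⬝ᵥ
      (oracleState p (fun _ => ((1 / Real.sqrt 2 : ℝ) : ℂ))).mulVec
        (fun z : Bool × Bool => if z.1 = z.2 then ((1 / Real.sqrt 2 : ℝ) : ℂ) else 0)
      = ((p (id : Bool → Bool) + (1/4) * p (fun _ => false)
          + (1/4) * p (fun _ => true) : ℝ) : ℂ) := by
  rw [dot_oracle]
  have huniv : (Finset.univ : Finset (Bool → Bool))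
      = {id, (fun _ => false), (fun _ => true), (fun b => !b)} := by decide
  rw [huniv]
  have h2 : (Real.sqrt 2 : ℂ) * (Real.sqrt 2 : ℂ) = 2 := by
    rw [← Complex.ofReal_mul, Real.mul_self_sqrt (by norm_num)]; norm_num
  rw [Finset.sum_insert (by decide), Finset.sum_insert (by decide),
    Finset.sum_insert (by decide), Finset.sum_singleton]
  simp only [psiVec, dotProduct, Fintype.sum_prod_type, Fintype.sum_bool,
    Pi.star_apply, Function.comp_apply, Complex.star_def, Complex.conj_ofReal, id_eq]
  norm_num [Complex.conj_ofReal]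
  ring_nf
  have h4 : ((Real.sqrt 2 : ℝ):ℂ)⁻¹ ^ 4 = 1/4 := by
    rw [inv_pow, show ((Real.sqrt 2 : ℝ):ℂ)^4 = (↑(Real.sqrt 2)*↑(Real.sqrt 2))*(↑(Real.sqrt 2)*↑(Real.sqrt 2)) by ring, h2]
    norm_num
  rw [h4]
  ring
end

section
/- Let α : Bool → ℂ satisfy α false ≠ 0 and α true ≠ 0. If p and q are probability distributions on functions Bool → Bool such that ρ(p, α) = ρ(q, α), then p = q. That is, in the binary case the quantum oracle state determines the entire distribution over functions, hence all counterfactuals. -/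
open Matrix

theorem binary_oracle_state_determines_distribution (α : Bool → ℂ)
    (hf : α false ≠ 0) (ht : α true ≠ 0)
    (p q : (Bool → Bool) → ℝ) (hp : IsProbDist p) (hq : IsProbDist q)
    (hρ : oracleState p α = oracleState q α) : p = q := by
  have entry : ∀ (r : (Bool → Bool) → ℝ) (f : Bool → Bool),
      oracleState r α (false, f false) (true, f true)
        = (r f : ℂ) * (α false * (starRingEnd ℂ) (α true)) := by
    intro r f
    unfold oracleState
    rw [Matrix.sum_apply]
    rw [Finset.sum_eq_single f]
    · simp [psiVec, vecMulVec_apply, smul_eq_mul, mul_assoc]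
    · intro g _ hg
      have hcase : g false ≠ f false ∨ g true ≠ f true := by
        by_contra h
        push_neg at h
        exact hg (funext fun b => by cases b <;> simp [h.1, h.2])
      rcases hcase with h | h <;>
        simp [psiVec, vecMulVec_apply, h]
    · intro h; exact absurd (Finset.mem_univ f) h
  funext f
  have h1 := congrFun (congrFun hρ (false, f false)) (true, f true)
  rw [entry p f, entry q f] at h1
  have hc : α false * (starRingEnd ℂ) (α true) ≠ 0 :=
    mul_ne_zero hf (by simpa using ht)
  have := mul_right_cancel₀ hc h1
  exact_mod_cast this
end

section
/- Let n ≥ 1 and let α : Fin n → ℂ satisfy α x ≠ 0 for every x. If p and q are probability distributions on functions Fin n → Fin n such that ρ(p, α) = ρ(q, α), then P_p(x, x', y, y') = P_q(x, x', y, y') for all x, x', y, y' ∈ Fin n; that is, the quantum oracle state identifies all two-way joint counterfactuals. -/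
open Matrix

/-- Two-way joint counterfactual `P_p(x, x', y, y') = ∑_{f : f x = y, f x' = y'} p f`. -/
def twoWay {A B : Type*} [Fintype A] [DecidableEq A] [Fintype B] [DecidableEq B]
    (p : (A → B) → ℝ) (x x' : A) (y y' : B) : ℝ :=
  ∑ f, if f x = y ∧ f x' = y' then p f else 0

lemma oracle_entry {A : Type*} [Fintype A] [DecidableEq A]
    (p : (A → A) → ℝ) (α : A → ℂ) (x x' : A) (y y' : A) :
    oracleState p α (x, y) (x', y') =
      (α x * (starRingEnd ℂ) (α x')) * ((twoWay p x x' y y' : ℝ) : ℂ) := by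
  simp only [oracleState, Matrix.sum_apply, Matrix.smul_apply, vecMulVec_apply,
    psiVec, Function.comp, smul_eq_mul, twoWay, Complex.ofReal_sum, Finset.mul_sum]
  refine Finset.sum_congr rfl fun f _ => ?_
  by_cases h1 : f x = y <;> by_cases h2 : f x' = y' <;>
    simp [h1, h2]
  ring

theorem oracle_state_identifies_twoWay_counterfactuals (n : ℕ) (hn : 1 ≤ n)
    (α : Fin n → ℂ) (hα : ∀ x, α x ≠ 0)
    (p q : (Fin n → Fin n) → ℝ) (hp : IsProbDist p) (hq : IsProbDist q)
    (hρ : oracleState p α = oracleState q α) :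
    ∀ x x' y y' : Fin n, twoWay p x x' y y' = twoWay q x x' y y' := by
  intro x x' y y'
  have h := congrFun (congrFun hρ (x, y)) (x', y')
  rw [oracle_entry, oracle_entry] at h
  have hne : α x * (starRingEnd ℂ) (α x') ≠ 0 :=
    mul_ne_zero (hα x) (by simpa using hα x')
  have := mul_left_cancel₀ hne h
  exact_mod_cast this
end

section
/- Let n ≥ 2. Let p be the uniform probability distribution on the n constant functions Fin n → Fin n, and let q be the uniform probability distribution on the bijections of Fin n (assigning 1/n! to each bijective function and 0 to all other functions). Then for all x, y ∈ Fin n, P_p(x, y) = P_q(x, y) = 1/n, but for all x ≠ x' and all y, P_p(x, x', y, y) = 1/n while P_q(x, x', y, y) = 0. In particular, distinct distributions on functions can induce identical one-way counterfactuals while differing on two-way joint counterfactuals. -/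
/-- Uniform distribution on the `n` constant functions `Fin n → Fin n`. -/
noncomputable def unifConst (n : ℕ) : (Fin n → Fin n) → ℝ :=
  fun f => if ∃ c, f = fun _ => c then 1 / (n : ℝ) else 0

/-- Uniform distribution on the `n!` bijections of `Fin n`. -/
noncomputable def unifBij (n : ℕ) : (Fin n → Fin n) → ℝ :=
  fun f => if Function.Bijective f then 1 / (Nat.factorial n : ℝ) else 0

/-!
Distributions invariant under post-composition with permutations of the outputs have uniform
one-way counterfactuals, and the uniform distribution on bijections is such a distribution; for
the constants, the only function with `f x = y` and positive mass is the constant `y`. On two-way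
counterfactuals the two differ: constants satisfy `f x = f x'`, so their two-way counterfactual
collapses to the one-way one, while bijections never send `x ≠ x'` to the same `y`.
-/

open Finset Function

section Counterfactuals

variable {A B : Type*} [Fintype A] [DecidableEq A] [Fintype B] [DecidableEq B]

theorem sum_oneWay (p : (A → B) → ℝ) (x : A) : ∑ y, oneWay p x y = ∑ f, p f := by
  simp only [oneWay]
  rw [Finset.sum_comm]
  simp

theorem oneWay_perm_apply (p : (A → B) → ℝ) (hp : ∀ (σ : Equiv.Perm B) f, p (σ ∘ f) = p f)
    (σ : Equiv.Perm B) (x : A) (y : B) : oneWay p x (σ y) = oneWay p x y := by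
  refine (Fintype.sum_equiv (Equiv.piCongrRight fun _ => σ) _ _ fun f => ?_).symm
  change _ = if σ (f x) = σ y then p (σ ∘ f) else 0
  simp only [σ.apply_eq_iff_eq, hp]

theorem oneWay_eq_inv_card (p : (A → B) → ℝ) (hsum : ∑ f, p f = 1)
    (hp : ∀ (σ : Equiv.Perm B) f, p (σ ∘ f) = p f) (x : A) (y : B) :
    oneWay p x y = 1 / Fintype.card B := by
  have hconst : ∀ y', oneWay p x y' = oneWay p x y := fun y' => by
    simpa using oneWay_perm_apply p hp (Equiv.swap y y') x y
  have hcard : (Fintype.card B : ℝ) * oneWay p x y = 1 := by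
    rw [← hsum, ← sum_oneWay p x, Finset.sum_congr rfl fun y' _ => hconst y']
    simp
  have hB : (Fintype.card B : ℝ) ≠ 0 := left_ne_zero_of_mul_eq_one hcard
  field_simp
  linarith

theorem twoWay_eq_oneWay_of_apply_eq (p : (A → B) → ℝ) {x x' : A}
    (hp : ∀ f, p f ≠ 0 → f x = f x') (y : B) : twoWay p x x' y y = oneWay p x y := by
  refine Finset.sum_congr rfl fun f _ => ?_
  by_cases hf : p f = 0
  · simp [hf]
  · simp [← hp f hf]

theorem twoWay_eq_zero_of_injective (p : (A → B) → ℝ) (hp : ∀ f, p f ≠ 0 → Injective f)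
    {x x' : A} (hx : x ≠ x') (y : B) : twoWay p x x' y y = 0 := by
  refine Finset.sum_eq_zero fun f _ => ite_eq_right_iff.mpr fun ⟨hfx, hfx'⟩ => ?_
  by_contra hf
  exact hx (hp f hf (hfx.trans hfx'.symm))

end Counterfactuals

theorem apply_eq_apply_of_unifConst_ne_zero (n : ℕ) {f : Fin n → Fin n} (hf : unifConst n f ≠ 0)
    (x x' : Fin n) : f x = f x' := by
  obtain ⟨c, rfl⟩ : ∃ c, f = fun _ => c := by
    by_contra h
    exact hf (if_neg h)
  rfl

theorem oneWay_unifConst (n : ℕ) (x y : Fin n) : oneWay (unifConst n) x y = 1 / n := by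
  rw [oneWay, Finset.sum_eq_single (fun _ => y)]
  · exact if_pos rfl |>.trans (if_pos ⟨y, rfl⟩)
  · intro f _ hf
    refine ite_eq_right_iff.mpr fun hfx => if_neg ?_
    rintro ⟨c, rfl⟩
    exact hf (hfx ▸ rfl)
  · simp

theorem injective_of_unifBij_ne_zero (n : ℕ) {f : Fin n → Fin n} (hf : unifBij n f ≠ 0) :
    Injective f := by
  by_contra h
  exact hf (if_neg fun hb => h hb.injective)

theorem unifBij_perm_comp (n : ℕ) (σ : Equiv.Perm (Fin n)) (f : Fin n → Fin n) :
    unifBij n (σ ∘ f) = unifBij n f := by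
  simp only [unifBij, σ.comp_bijective]

theorem sum_unifBij (n : ℕ) : ∑ f, unifBij n f = 1 := by
  have hcard : #{f : Fin n → Fin n | Bijective f} = n.factorial := by
    rw [← Fintype.card_subtype, Fintype.card_congr Equiv.bijectiveEquiv, Fintype.card_perm,
      Fintype.card_fin]
  simp only [unifBij, Finset.sum_ite, Finset.sum_const_zero, add_zero, Finset.sum_const, hcard,
    nsmul_eq_mul]
  field_simp

theorem constants_vs_bijections (n : ℕ) (hn : 2 ≤ n) :
    unifConst n ≠ unifBij n ∧
    (∀ x y : Fin n, oneWay (unifConst n) x y = 1 / (n : ℝ) ∧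
      oneWay (unifBij n) x y = 1 / (n : ℝ)) ∧
    (∀ x x' : Fin n, x ≠ x' → ∀ y : Fin n,
      twoWay (unifConst n) x x' y y = 1 / (n : ℝ) ∧
      twoWay (unifBij n) x x' y y = 0) := by
  have hOneWay : ∀ x y : Fin n, oneWay (unifConst n) x y = 1 / (n : ℝ) ∧
      oneWay (unifBij n) x y = 1 / (n : ℝ) := fun x y =>
    ⟨oneWay_unifConst n x y,
      by simpa using oneWay_eq_inv_card _ (sum_unifBij n) (unifBij_perm_comp n) x y⟩
  have hTwoWay : ∀ x x' : Fin n, x ≠ x' → ∀ y : Fin n,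
      twoWay (unifConst n) x x' y y = 1 / (n : ℝ) ∧ twoWay (unifBij n) x x' y y = 0 :=
    fun x x' hx y =>
      ⟨(twoWay_eq_oneWay_of_apply_eq _
          (fun _ hf => apply_eq_apply_of_unifConst_ne_zero n hf x x') y).trans
          (oneWay_unifConst n x y),
        twoWay_eq_zero_of_injective _ (fun _ => injective_of_unifBij_ne_zero n) hx y⟩
  refine ⟨fun h => ?_, hOneWay, hTwoWay⟩
  have h01 : (⟨0, by omega⟩ : Fin n) ≠ ⟨1, by omega⟩ := by simp
  obtain ⟨hConst, hBij⟩ := hTwoWay _ _ h01 ⟨0, by omega⟩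
  rw [h, hBij] at hConst
  exact one_div_ne_zero (by positivity) hConst.symm
end

section
/- Let n ≥ 1 and let p, q be probability distributions on functions Fin n → Fin n such that P_p(x, x', y, y') = P_q(x, x', y, y') for all x, x', y, y' ∈ Fin n. Then ρ(p, α) = ρ(q, α) for every α : Fin n → ℂ; that is, the quantum oracle state depends on the distribution only through its two-way joint counterfactuals. -/
open Matrix

theorem oracle_state_depends_only_on_twoWay (n : ℕ) (hn : 1 ≤ n)
    (p q : (Fin n → Fin n) → ℝ) (hp : IsProbDist p) (hq : IsProbDist q)
    (h2 : ∀ x x' y y' : Fin n, twoWay p x x' y y' = twoWay q x x' y y') :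
    ∀ α : Fin n → ℂ, oracleState p α = oracleState q α := by
  intro α
  ext ⟨x, y⟩ ⟨x', y'⟩
  have key : ∀ r : (Fin n → Fin n) → ℝ,
      (oracleState r α) (x, y) (x', y') =
        (twoWay r x x' y y' : ℂ) * (α x * star (α x')) := by
    intro r
    simp only [oracleState, twoWay, Matrix.sum_apply, Matrix.smul_apply, vecMulVec_apply,
      Function.comp_apply, psiVec, Complex.ofReal_sum]
    rw [Finset.sum_mul]
    refine Finset.sum_congr rfl fun f _ => ?_
    by_cases h1 : f x = y <;> by_cases h2 : f x' = y' <;>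
      simp [h1, h2, mul_comm, mul_assoc, mul_left_comm]
  rw [key, key, h2]
end

section
/- There exist probability distributions p and q on functions ZMod 3 → ZMod 3 with p ≠ q such that ρ(p, α) = ρ(q, α) for every amplitude vector α : ZMod 3 → ℂ, yet the three-way joint counterfactuals differ: ∑ of p f over all f with f 0 = 0, f 1 = 1, f 2 = 2 is not equal to ∑ of q f over all f with f 0 = 0, f 1 = 1, f 2 = 2. Hence three-way joint counterfactuals are not identifiable from the quantum oracle state. -/
open Matrix

def Dw : ZMod 3 → ℤ := fun i => if i = 0 then 2 else -1

lemma key : ∀ a u b v : ZMod 3,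
    (∑ f : ZMod 3 → ZMod 3, Dw (f 0 + f 1 + f 2) *
      ((if f a = u then 1 else 0) * (if f b = v then 1 else 0))) = 0 := by decide

lemma keysum : (∑ f : ZMod 3 → ZMod 3, Dw (f 0 + f 1 + f 2)) = 0 := by decide

noncomputable def pdist : (ZMod 3 → ZMod 3) → ℝ :=
  fun f => 1/27 + (Dw (f 0 + f 1 + f 2) : ℝ)/54

noncomputable def qdist : (ZMod 3 → ZMod 3) → ℝ := fun _ => 1/27

lemma Dw_cases (s : ZMod 3) : Dw s = 2 ∨ Dw s = -1 := by
  unfold Dw; split <;> simp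

lemma keyC (a u b v : ZMod 3) :
    ∑ f : ZMod 3 → ZMod 3, (Dw (f 0 + f 1 + f 2) : ℂ) *
      ((if f a = u then 1 else 0) * (if f b = v then 1 else 0)) = 0 := by
  have h2 : (∑ f : ZMod 3 → ZMod 3, (Dw (f 0 + f 1 + f 2) : ℂ) *
      ((if f a = u then 1 else 0) * (if f b = v then 1 else 0)))
      = ((∑ f : ZMod 3 → ZMod 3, Dw (f 0 + f 1 + f 2) *
      ((if f a = u then 1 else 0) * (if f b = v then 1 else 0)) : ℤ) : ℂ) := by
    rw [Int.cast_sum]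
    refine Finset.sum_congr rfl fun f _ => ?_
    push_cast [apply_ite (fun z : ℤ => (z : ℂ))]
    ring
  rw [h2, key a u b v]
  norm_num

theorem threeWay_not_identifiable_from_oracle_state :
    ∃ p q : (ZMod 3 → ZMod 3) → ℝ,
      IsProbDist p ∧ IsProbDist q ∧ p ≠ q ∧
      (∀ α : ZMod 3 → ℂ, oracleState p α = oracleState q α) ∧
      (∑ f : ZMod 3 → ZMod 3, if f 0 = 0 ∧ f 1 = 1 ∧ f 2 = 2 then p f else 0)
        ≠ (∑ f : ZMod 3 → ZMod 3, if f 0 = 0 ∧ f 1 = 1 ∧ f 2 = 2 then q f else 0) := by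
  have hcard : Fintype.card (ZMod 3 → ZMod 3) = 27 := by decide
  have hDid : Dw ((0 : ZMod 3) + 1 + 2) = 2 := by decide
  refine ⟨pdist, qdist, ⟨?_, ?_⟩, ⟨?_, ?_⟩, ?_, ?_, ?_⟩
  · -- pdist nonneg
    intro f
    rcases Dw_cases (f 0 + f 1 + f 2) with h | h <;>
      simp only [pdist, h] <;> norm_num
  · -- pdist sums to 1
    unfold pdist
    rw [Finset.sum_add_distrib, Finset.sum_const, ← Finset.sum_div]
    have : (∑ f : ZMod 3 → ZMod 3, (Dw (f 0 + f 1 + f 2) : ℝ)) = 0 := by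
      rw [← Int.cast_sum, keysum]; norm_num
    rw [this]
    simp [Finset.card_univ, hcard]
  · intro f; unfold qdist; norm_num
  · unfold qdist
    rw [Finset.sum_const]
    simp [Finset.card_univ, hcard]
  · -- pdist ≠ qdist
    intro h
    have := congrFun h id
    simp only [pdist, qdist, id] at this
    rw [hDid] at this
    norm_num at this
  · -- oracle states equal
    intro α
    ext z w
    simp only [oracleState, Matrix.sum_apply, Matrix.smul_apply, vecMulVec_apply,
      smul_eq_mul, Function.comp_apply]
    rw [← sub_eq_zero, ← Finset.sum_sub_distrib]
    have hpsi : ∀ f : ZMod 3 → ZMod 3,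
        psiVec α f z * star (psiVec α f w)
          = (α z.1 * star (α w.1)) *
            ((if f z.1 = z.2 then (1:ℂ) else 0) * (if f w.1 = w.2 then 1 else 0)) := by
      intro f
      simp only [psiVec]
      split_ifs <;> simp
    have hterm : ∀ f : ZMod 3 → ZMod 3,
        (↑(pdist f) : ℂ) * (psiVec α f z * star (psiVec α f w))
          - (↑(qdist f) : ℂ) * (psiVec α f z * star (psiVec α f w))
          = (α z.1 * star (α w.1) / 54) *
            ((Dw (f 0 + f 1 + f 2) : ℂ) *
              ((if f z.1 = z.2 then (1:ℂ) else 0) * (if f w.1 = w.2 then 1 else 0))) := by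
      intro f
      rw [hpsi f]
      simp only [pdist, qdist]
      push_cast
      ring
    calc (∑ f : ZMod 3 → ZMod 3,
            ((↑(pdist f) : ℂ) * (psiVec α f z * star (psiVec α f w))
              - (↑(qdist f) : ℂ) * (psiVec α f z * star (psiVec α f w))))
        = ∑ f : ZMod 3 → ZMod 3, (α z.1 * star (α w.1) / 54) *
            ((Dw (f 0 + f 1 + f 2) : ℂ) *
              ((if f z.1 = z.2 then (1:ℂ) else 0) * (if f w.1 = w.2 then 1 else 0))) :=
          Finset.sum_congr rfl fun f _ => hterm f
      _ = (α z.1 * star (α w.1) / 54) * ∑ f : ZMod 3 → ZMod 3,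
            ((Dw (f 0 + f 1 + f 2) : ℂ) *
              ((if f z.1 = z.2 then (1:ℂ) else 0) * (if f w.1 = w.2 then 1 else 0))) := by
          rw [Finset.mul_sum]
      _ = 0 := by rw [keyC]; ring
  · -- three-way differs
    have hcond : ∀ f : ZMod 3 → ZMod 3,
        (f 0 = 0 ∧ f 1 = 1 ∧ f 2 = 2) ↔ f = id := by decide
    have hsum : ∀ r : (ZMod 3 → ZMod 3) → ℝ,
        (∑ f : ZMod 3 → ZMod 3, if f 0 = 0 ∧ f 1 = 1 ∧ f 2 = 2 then r f else 0) = r id := by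
      intro r
      rw [Finset.sum_congr rfl (fun f _ => if_congr (hcond f) rfl rfl)]
      simp
    rw [hsum, hsum]
    simp only [pdist, qdist, id]
    rw [hDid]
    norm_num
end

section
/- Let D be a probability distribution on functions g : Fin 3 → Bool such that for all i ≠ j in Fin 3 and all b, b' ∈ Bool, ∑ of D g over all g with g i = b and g j = b' equals 1/4. Then for every g : Fin 3 → Bool: if the number of indices i with g i = true is odd, then D g = D(const true), and if that number is even, then D g = 1/4 − D(const true), where const true denotes the constant-true function. -/
/-!
The two functions `Fin 3 → Bool` that differ only in the coordinate `k` are exactly the functions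
with prescribed values at the other two coordinates, so their masses add up to a pairwise marginal,
`1/4`. Flipping a coordinate flips the parity of the number of `true` values, and walking from
`g` to the constant-true function one flip at a time gives the claim.
-/

open Finset Function

section Flip

variable {ι : Type*} [Fintype ι] [DecidableEq ι]

theorem card_filter_eq_false_update_true_add_one {g : ι → Bool} {k : ι} (hk : g k = false) :
    #{i | update g k true i = false} + 1 = #{i | g i = false} := by
  have hset : ({i | update g k true i = false} : Finset ι) =
      ({i | g i = false} : Finset ι).erase k := by
    ext i
    by_cases hi : i = k <;> simp [hi, update_apply]
  rw [hset, card_erase_add_one (by simpa using hk)]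

theorem eq_of_add_update_not_eq (f : (ι → Bool) → ℝ) (c : ℝ)
    (hf : ∀ g k, f g + f (update g k (!g k)) = c) (g : ι → Bool) :
    f g = if Even #{i | g i = false} then f (fun _ => true) else c - f (fun _ => true) := by
  induction hn : #{i | g i = false} generalizing g with
  | zero =>
    have hg : g = fun _ => true := by
      funext i
      simpa using filter_eq_empty_iff.mp (card_eq_zero.mp hn) (mem_univ i)
    simp [hg]
  | succ n ih =>
    obtain ⟨k, hk⟩ : ∃ k, g k = false := by
      by_contra! hg
      simp [hg] at hn
    have hflip : f g = c - f (update g k true) := by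
      have := hf (update g k true) k
      rw [update_self, Bool.not_true, update_idem, ← hk, update_eq_self] at this
      linarith
    have hcard := card_filter_eq_false_update_true_add_one hk
    rw [hflip, ih _ (by omega)]
    simp only [Nat.even_add_one]
    split_ifs <;> ring

end Flip

theorem add_update_not_eq_of_marginal (D : (Fin 3 → Bool) → ℝ)
    (h : ∀ i j : Fin 3, i ≠ j → ∀ b b' : Bool,
      (∑ g : Fin 3 → Bool, if g i = b ∧ g j = b' then D g else 0) = 1/4)
    (g : Fin 3 → Bool) (k : Fin 3) :
    D g + D (update g k (!g k)) = 1/4 := by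
  obtain ⟨i, j, hij, hik, hjk⟩ : ∃ i j : Fin 3, i ≠ j ∧ i ≠ k ∧ j ≠ k := by
    fin_cases k
    exacts [⟨1, 2, by decide⟩, ⟨0, 2, by decide⟩, ⟨0, 1, by decide⟩]
  have hne : g ≠ update g k (!g k) := fun he => by
    simpa using congr_fun he k
  rw [← h i j hij (g i) (g j), Fintype.sum_eq_add _ _ hne]
  · simp [update_of_ne hik, update_of_ne hjk]
  · rintro g' ⟨hg, hg'⟩
    rw [if_neg]
    rintro ⟨hgi, hgj⟩
    have hl : ∀ l, l ≠ k → g' l = g l := fun l hl => by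
      rcases (by omega : l = i ∨ l = j) with rfl | rfl <;> assumption
    rcases Bool.eq_or_eq_not (g' k) (g k) with hk | hk
    · exact hg (funext fun l => if hlk : l = k then hlk ▸ hk else hl l hlk)
    · exact hg' (funext fun l => if hlk : l = k then by simp [hlk, hk] else by simp [hlk, hl l hlk])

theorem even_card_false_iff_odd_card_true (g : Fin 3 → Bool) :
    Even #{i | g i = false} ↔ Odd #{i | g i = true} := by
  have h := card_filter_add_card_filter_not (s := univ) (fun i => g i = true)
  simp only [Bool.not_eq_true, card_univ, Fintype.card_fin] at h
  have hodd : Odd (#{i | g i = true} + #{i | g i = false}) := by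
    rw [h]
    decide
  exact (Nat.odd_add.mp hodd).symm

theorem uniform_twoWay_marginals_determine_parity_form_general
    (D : (Fin 3 → Bool) → ℝ)
    (h : ∀ i j : Fin 3, i ≠ j → ∀ b b' : Bool,
      (∑ g : Fin 3 → Bool, if g i = b ∧ g j = b' then D g else 0) = 1/4) :
    ∀ g : Fin 3 → Bool,
      (Odd (Finset.univ.filter fun i => g i = true).card →
        D g = D (fun _ => true)) ∧
      (Even (Finset.univ.filter fun i => g i = true).card →
        D g = 1/4 - D (fun _ => true)) := by
  intro g
  have hD := eq_of_add_update_not_eq D (1/4) (add_update_not_eq_of_marginal D h) g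
  have hparity := even_card_false_iff_odd_card_true g
  refine ⟨fun hodd => ?_, fun heven => ?_⟩
  · rw [hD, if_pos (hparity.mpr hodd)]
  · rw [hD, if_neg (fun h => Nat.not_odd_iff_even.mpr heven (hparity.mp h))]

theorem uniform_twoWay_marginals_determine_parity_form
    (D : (Fin 3 → Bool) → ℝ) (hD : IsProbDist D)
    (h : ∀ i j : Fin 3, i ≠ j → ∀ b b' : Bool,
      (∑ g : Fin 3 → Bool, if g i = b ∧ g j = b' then D g else 0) = 1/4) :
    ∀ g : Fin 3 → Bool,
      (Odd (Finset.univ.filter fun i => g i = true).card →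
        D g = D (fun _ => true)) ∧
      (Even (Finset.univ.filter fun i => g i = true).card →
        D g = 1/4 - D (fun _ => true)) :=
  uniform_twoWay_marginals_determine_parity_form_general D h
end

section
/- Let n ≥ 3 and fix values ŷ i ∈ Bool for every index i ∈ Fin n with 3 ≤ (i : ℕ). Then: (a) there exists a probability distribution p on functions Fin n → Bool such that ∑ of p f over all f with f i = true equals 1/2 for each i ∈ Fin n with (i : ℕ) < 3, ∑ of p f over all f with f i = ŷ i equals 1 for each i with 3 ≤ (i : ℕ), and ∑ of p f over all f with f 0 = f 1 = f 2 = true and f i = ŷ i for all i with 3 ≤ (i : ℕ) equals 1/2; and (b) every probability distribution q on functions Fin n → Bool satisfying, for all distinct i, j ∈ Fin n with (i : ℕ) < 3 and (j : ℕ) < 3 and all b, b' ∈ Bool, that ∑ of q f over all f with f i = b and f j = b' equals 1/4, satisfies ∑ of q f over all f with f 0 = f 1 = f 2 = true and f i = ŷ i for all i with 3 ≤ (i : ℕ) ≤ 1/4. Hence the quantum constraints give a strictly tighter bound on this n-way joint counterfactual than the classical one-way constraints. -/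
private lemma sum_point {A : Type*} [Fintype A] [DecidableEq A] (P : A → Prop) [DecidablePred P]
    (g : A) (c : ℝ) :
    (∑ f, if P f then (if f = g then c else 0) else 0) = if P g then c else 0 := by
  rw [Finset.sum_congr rfl (fun f _ => ?_), Finset.sum_ite_eq' Finset.univ g
      (fun f => if P f then c else 0)]
  · simp
  · by_cases h : f = g
    · subst h; simp
    · simp [h]

theorem quantum_advantage_for_nWay_partial_identification
    (n : ℕ) (hn : 3 ≤ n) (yhat : Fin n → Bool) :
    -- (a) classically (with only one-way constraints) the n-way joint can reach 1/2
    (∃ p : (Fin n → Bool) → ℝ, IsProbDist p ∧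
      (∀ i : Fin n, (i : ℕ) < 3 →
        (∑ f : Fin n → Bool, if f i = true then p f else 0) = 1/2) ∧
      (∀ i : Fin n, 3 ≤ (i : ℕ) →
        (∑ f : Fin n → Bool, if f i = yhat i then p f else 0) = 1) ∧
      (∑ f : Fin n → Bool,
        if (∀ i : Fin n, (i : ℕ) < 3 → f i = true) ∧
           (∀ i : Fin n, 3 ≤ (i : ℕ) → f i = yhat i)
        then p f else 0) = 1/2) ∧
    -- (b) under the quantum (two-way) constraints the n-way joint is at most 1/4
    (∀ q : (Fin n → Bool) → ℝ, IsProbDist q →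
      (∀ i j : Fin n, i ≠ j → (i : ℕ) < 3 → (j : ℕ) < 3 → ∀ b b' : Bool,
        (∑ f : Fin n → Bool, if f i = b ∧ f j = b' then q f else 0) = 1/4) →
      (∑ f : Fin n → Bool,
        if (∀ i : Fin n, (i : ℕ) < 3 → f i = true) ∧
           (∀ i : Fin n, 3 ≤ (i : ℕ) → f i = yhat i)
        then q f else 0) ≤ 1/4) := by
  constructor
  · -- part (a)
    set g1 : Fin n → Bool := fun i => if (i : ℕ) < 3 then true else yhat i with hg1
    set g2 : Fin n → Bool := fun i => if (i : ℕ) < 3 then false else yhat i with hg2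
    refine ⟨fun f => (if f = g1 then (1:ℝ)/2 else 0) + (if f = g2 then (1:ℝ)/2 else 0),
      ⟨fun f => by positivity, ?_⟩, ?_, ?_, ?_⟩
    · rw [Finset.sum_add_distrib]
      simp
      norm_num
    · intro i hi
      rw [show (fun f : Fin n → Bool =>
          if f i = true then (if f = g1 then (1:ℝ)/2 else 0) + (if f = g2 then (1:ℝ)/2 else 0)
          else 0) = fun f => (if f i = true then (if f = g1 then (1:ℝ)/2 else 0) else 0)
          + (if f i = true then (if f = g2 then (1:ℝ)/2 else 0) else 0) from
          funext fun f => by by_cases h : f i = true <;> simp [h]]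
      rw [Finset.sum_add_distrib, sum_point, sum_point]
      simp [hg1, hg2, hi]
    · intro i hi
      rw [show (fun f : Fin n → Bool =>
          if f i = yhat i then (if f = g1 then (1:ℝ)/2 else 0) + (if f = g2 then (1:ℝ)/2 else 0)
          else 0) = fun f => (if f i = yhat i then (if f = g1 then (1:ℝ)/2 else 0) else 0)
          + (if f i = yhat i then (if f = g2 then (1:ℝ)/2 else 0) else 0) from
          funext fun f => by by_cases h : f i = yhat i <;> simp [h]]
      rw [Finset.sum_add_distrib, sum_point, sum_point]
      have : ¬ ((i : ℕ) < 3) := by omega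
      simp [hg1, hg2, this]
      norm_num
    · set P : (Fin n → Bool) → Prop := fun f =>
        (∀ i : Fin n, (i : ℕ) < 3 → f i = true) ∧ (∀ i : Fin n, 3 ≤ (i : ℕ) → f i = yhat i)
        with hP
      have hsplit : (fun f : Fin n → Bool =>
          if P f then (if f = g1 then (1:ℝ)/2 else 0) + (if f = g2 then (1:ℝ)/2 else 0)
          else 0) = fun f => (if P f then (if f = g1 then (1:ℝ)/2 else 0) else 0)
          + (if P f then (if f = g2 then (1:ℝ)/2 else 0) else 0) := by
        funext f
        by_cases h : P f
        · rw [if_pos h, if_pos h, if_pos h]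
        · rw [if_neg h, if_neg h, if_neg h]; ring
      rw [hsplit]
      rw [Finset.sum_add_distrib, sum_point, sum_point]
      have h1 : P g1 := by
        constructor
        · intro i hi; simp [hg1, hi]
        · intro i hi; have : ¬ ((i : ℕ) < 3) := by omega
          simp [hg1, this]
      have h2 : ¬ P g2 := by
        intro ⟨h, _⟩
        have := h ⟨0, by omega⟩ (by simp)
        simp [hg2] at this
      rw [if_pos h1, if_neg h2]
      norm_num
  · -- part (b)
    intro q hq hpair
    have i0 : Fin n := ⟨0, by omega⟩
    have i1 : Fin n := ⟨1, by omega⟩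
    have key := hpair ⟨0, by omega⟩ ⟨1, by omega⟩ (by simp [Fin.ext_iff]) (by simp) (by simp)
      true true
    rw [← key]
    apply Finset.sum_le_sum
    intro f _
    by_cases h : (∀ i : Fin n, (i : ℕ) < 3 → f i = true) ∧
        (∀ i : Fin n, 3 ≤ (i : ℕ) → f i = yhat i)
    · have h0 : f ⟨0, by omega⟩ = true := h.1 _ (by simp)
      have h1 : f ⟨1, by omega⟩ = true := h.1 _ (by simp)
      rw [if_pos h, if_pos ⟨h0, h1⟩]
    · rw [if_neg h]
      split
      · exact hq.1 f
      · exact le_refl 0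
end
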